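/- Let m ≥ 1 and a₀, b₀, ℓ, ℓ' be nonnegative integers with ℓ, ℓ' ≥ 1. Define Λ = a₀ + b₀ + (ℓ + ℓ')m, A₂ = {|a₀ - b₀ - ℓ'm|, |a₀ - b₀ - ℓ'm| + 2, …, a₀ + b₀ + ℓ'm}, and A₂* = {|a₀ - b₀ + ℓm|, …, a₀ + b₀ + ℓm}. Then ℓ = (Λ - max A₂)/m and ℓ' = (Λ - max A₂*)/m, and (ℓ + ℓ')m = min A₂* - min A₂ if and only if a₀ ≥ b₀ + ℓ'm. Moreover, if (ℓ+ℓ')m = min A₂* - min A₂ then a₀ = (max A₂ + min A₂)/2 and b₀ = (max A₂ - min A₂)/2 - ℓ'm, while otherwise a₀ = (max A₂ - min A₂)/2 and b₀ = (max A₂ + min A₂)/2 - ℓ'm. -/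
import Mathlib

/-- Recovery of the parameters of a tensor product `U = Z(a₀,ℓ) ⊗ Z(b₀,ℓ')*` from the
highest-weight data of `soc(U)` and `soc(U*)`.  Here `Λ = a₀+b₀+(ℓ+ℓ')m`,
`max A₂ = a₀+b₀+ℓ'm`, `min A₂ = |a₀-b₀-ℓ'm|`, `max A₂* = a₀+b₀+ℓm`,
`min A₂* = |a₀-b₀+ℓm|`. -/
theorem stmt_9 (a₀ b₀ ℓ ℓ' m : ℤ) (ha : 0 ≤ a₀) (hb : 0 ≤ b₀)
    (hℓ : 1 ≤ ℓ) (hℓ' : 1 ≤ ℓ') (hm : 1 ≤ m) :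
    ((a₀ + b₀ + (ℓ + ℓ') * m) - (a₀ + b₀ + ℓ' * m)) / m = ℓ ∧
    ((a₀ + b₀ + (ℓ + ℓ') * m) - (a₀ + b₀ + ℓ * m)) / m = ℓ' ∧
    ((ℓ + ℓ') * m = |a₀ - b₀ + ℓ * m| - |a₀ - b₀ - ℓ' * m| ↔ b₀ + ℓ' * m ≤ a₀) ∧
    ((ℓ + ℓ') * m = |a₀ - b₀ + ℓ * m| - |a₀ - b₀ - ℓ' * m| →
      a₀ = ((a₀ + b₀ + ℓ' * m) + |a₀ - b₀ - ℓ' * m|) / 2 ∧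
      b₀ = ((a₀ + b₀ + ℓ' * m) - |a₀ - b₀ - ℓ' * m|) / 2 - ℓ' * m) ∧
    ((ℓ + ℓ') * m ≠ |a₀ - b₀ + ℓ * m| - |a₀ - b₀ - ℓ' * m| →
      a₀ = ((a₀ + b₀ + ℓ' * m) - |a₀ - b₀ - ℓ' * m|) / 2 ∧
      b₀ = ((a₀ + b₀ + ℓ' * m) + |a₀ - b₀ - ℓ' * m|) / 2 - ℓ' * m) := by
  have hm0 : m ≠ 0 := by omega
  have hx : m ≤ ℓ * m := le_mul_of_one_le_left (by omega) hℓ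
  have hy : m ≤ ℓ' * m := le_mul_of_one_le_left (by omega) hℓ'
  have hd1 : (a₀ + b₀ + (ℓ + ℓ') * m - (a₀ + b₀ + ℓ' * m)) = ℓ * m := by ring
  have hd2 : (a₀ + b₀ + (ℓ + ℓ') * m - (a₀ + b₀ + ℓ * m)) = ℓ' * m := by ring
  have hsum : (ℓ + ℓ') * m = ℓ * m + ℓ' * m := by ring
  refine ⟨by rw [hd1, Int.mul_ediv_cancel _ hm0], by rw [hd2, Int.mul_ediv_cancel _ hm0], ?_⟩
  rw [hsum]
  rcases abs_cases (a₀ - b₀ - ℓ' * m) with (⟨h1, h2⟩|⟨h1, h2⟩) <;>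
  rcases abs_cases (a₀ - b₀ + ℓ * m) with (⟨h3, h4⟩|⟨h3, h4⟩) <;>
  rw [h1, h3] <;>
  generalize ℓ * m = x at * <;> generalize ℓ' * m = y at * <;>
  omega
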